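/- Let 𝒮 ⊂ ℝ^d be a simplex with vertices v_1,...,v_K satisfying d_max := max_k ‖v_k‖ ≥ σ*/2 and min_{k≠ℓ} ‖v_k − v_ℓ‖ ≥ √2·σ* for some σ* > 0. Define 𝒦(h₀) = {k : ‖v_k‖ ≥ d_max − h₀} and 𝒱(ε₀, h₀) = ∪_{k∈𝒦(h₀)} 𝒱_k(ε₀) with 𝒱_k(ε₀) the ε₀-simplicial-neighborhood of v_k. Given t > 0 with max{1, d_max/σ*}·t < 3σ*, if h₀ = σ*/3 and 1/2 > ε₀ ≥ (6/σ*)·max{1, d_max/σ*}·t, then every x ∈ 𝒮 \ 𝒱(ε₀, h₀) satisfies ‖x‖ ≤ d_max − t. -/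

import Mathlib

/-!
Write `x = ∑ πₖ vₖ` and let `ρ` be the weight on the near-maximal vertices `𝒦`, those with
`‖vₖ‖ ≥ D - h`. The remaining vertices contribute at most `(1 - ρ)(D - h)` to `‖x‖`. If
`1 - ρ ≥ ε / 2`, this alone costs `εh / 2 ≥ t`. Otherwise `x ∉ 𝒱(ε, h)` caps each weight on `𝒦`
by `1 - ε`, so in the Gram expansion of `‖∑_{k ∈ 𝒦} πₖ vₖ‖²` the off-diagonal terms, lowered by
the separation to `D² - σ²`, carry a fraction at least `ε / 2` of the total; this gives
`‖∑_{k ∈ 𝒦} πₖ vₖ‖² ≤ ρ² (D² - σ² ε / 2)`, hence a loss of `ρ σ² ε / (4D) ≥ t`.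
-/

open scoped BigOperators

noncomputable def sval {d K : ℕ} (A : Matrix (Fin d) (Fin K) ℝ) (k : ℕ) : ℝ :=
  ⨆ W : {W : Submodule ℝ (EuclideanSpace ℝ (Fin K)) // Module.finrank ℝ W = k},
    ⨅ x : {x : EuclideanSpace ℝ (Fin K) // x ∈ W.1 ∧ ‖x‖ = 1},
      ‖Matrix.toEuclideanLin A x.1‖

noncomputable def vnorm {d : ℕ} (x : Fin d → ℝ) : ℝ :=
  Real.sqrt (∑ i, x i ^ 2)

open scoped RealInnerProductSpace

section Separated

variable {ι E : Type*} [NormedAddCommGroup E] [InnerProductSpace ℝ E]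

theorem real_inner_le_of_norm_le_of_sep {u w : E} {D σ : ℝ} (hu : ‖u‖ ≤ D) (hw : ‖w‖ ≤ D)
    (hsep : 2 * σ ^ 2 ≤ ‖u - w‖ ^ 2) : ⟪u, w⟫ ≤ D ^ 2 - σ ^ 2 := by
  have hu2 : ‖u‖ ^ 2 ≤ D ^ 2 := pow_le_pow_left₀ (norm_nonneg u) hu 2
  have hw2 : ‖w‖ ^ 2 ≤ D ^ 2 := pow_le_pow_left₀ (norm_nonneg w) hw 2
  linarith [norm_sub_sq_real u w]

theorem norm_sum_smul_le_of_norm_le (s : Finset ι) {w : ι → ℝ} {v : ι → E} {B : ℝ}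
    (hw : ∀ k ∈ s, 0 ≤ w k) (hv : ∀ k ∈ s, ‖v k‖ ≤ B) :
    ‖∑ k ∈ s, w k • v k‖ ≤ (∑ k ∈ s, w k) * B := by
  rw [Finset.sum_mul]
  refine norm_sum_le_of_le s fun k hk => ?_
  rw [norm_smul, Real.norm_of_nonneg (hw k hk)]
  exact mul_le_mul_of_nonneg_left (hv k hk) (hw k hk)

theorem norm_sum_smul_sq_le_of_sep (s : Finset ι) {w : ι → ℝ} {v : ι → E} {D σ : ℝ}
    (hw : ∀ k ∈ s, 0 ≤ w k) (hv : ∀ k ∈ s, ‖v k‖ ≤ D)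
    (hsep : ∀ k ∈ s, ∀ l ∈ s, k ≠ l → 2 * σ ^ 2 ≤ ‖v k - v l‖ ^ 2) :
    ‖∑ k ∈ s, w k • v k‖ ^ 2 ≤
      (∑ k ∈ s, w k) ^ 2 * (D ^ 2 - σ ^ 2) + (∑ k ∈ s, w k ^ 2) * σ ^ 2 := by
  classical
  have hgram : ∀ k ∈ s, ∀ l ∈ s,
      ⟪v k, v l⟫ ≤ D ^ 2 - σ ^ 2 + if k = l then σ ^ 2 else 0 := by
    intro k hk l hl
    by_cases hkl : k = l
    · subst hkl
      rw [if_pos rfl, real_inner_self_eq_norm_sq]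
      nlinarith [norm_nonneg (v k), hv k hk]
    · rw [if_neg hkl, add_zero]
      exact real_inner_le_of_norm_le_of_sep (hv k hk) (hv l hl) (hsep k hk l hl hkl)
  calc ‖∑ k ∈ s, w k • v k‖ ^ 2 = ∑ k ∈ s, ∑ l ∈ s, w k * w l * ⟪v k, v l⟫ := by
        rw [← real_inner_self_eq_norm_sq]
        simp only [inner_sum, sum_inner, real_inner_smul_left, real_inner_smul_right]
        rw [Finset.sum_comm]
        refine Finset.sum_congr rfl fun k _ => Finset.sum_congr rfl fun l _ => by ring
    _ ≤ ∑ k ∈ s, ∑ l ∈ s, w k * w l * (D ^ 2 - σ ^ 2 + if k = l then σ ^ 2 else 0) :=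
        Finset.sum_le_sum fun k hk => Finset.sum_le_sum fun l hl =>
          mul_le_mul_of_nonneg_left (hgram k hk l hl) (mul_nonneg (hw k hk) (hw l hl))
    _ = (∑ k ∈ s, w k) ^ 2 * (D ^ 2 - σ ^ 2) + (∑ k ∈ s, w k ^ 2) * σ ^ 2 := by
        simp only [mul_add, Finset.sum_add_distrib, mul_ite, mul_zero, Finset.sum_ite_eq]
        rw [Finset.sum_ite_of_true fun _ hk => hk, sq (∑ k ∈ s, w k), Finset.sum_mul_sum,
          Finset.sum_mul, Finset.sum_mul]
        simp only [Finset.sum_mul, sq]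

theorem norm_sum_smul_le_of_weight_le (s : Finset ι) {w : ι → ℝ} {v : ι → E} {D σ ε : ℝ}
    (hw : ∀ k ∈ s, 0 ≤ w k) (hv : ∀ k ∈ s, ‖v k‖ ≤ D)
    (hsep : ∀ k ∈ s, ∀ l ∈ s, k ≠ l → 2 * σ ^ 2 ≤ ‖v k - v l‖ ^ 2)
    (hwε : ∀ k ∈ s, w k ≤ 1 - ε) (hmass : 1 - ε / 2 ≤ ∑ k ∈ s, w k)
    (hD : 0 < D) (hε : ε ≤ 1) (hσε : σ ^ 2 * ε ≤ 4 * D ^ 2) :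
    ‖∑ k ∈ s, w k • v k‖ ≤ (∑ k ∈ s, w k) * (D - σ ^ 2 * ε / (4 * D)) := by
  set ρ := ∑ k ∈ s, w k
  set c := σ ^ 2 * ε / (4 * D)
  have hρ : 0 ≤ ρ := Finset.sum_nonneg hw
  have hc : c ≤ D := by rw [div_le_iff₀ (by positivity)]; nlinarith
  have hsq : ∑ k ∈ s, w k ^ 2 ≤ (1 - ε) * ρ := by
    rw [Finset.mul_sum]
    exact Finset.sum_le_sum fun k hk => by nlinarith [hw k hk, hwε k hk]
  have hmass' : (1 - ε) * ρ ≤ ρ ^ 2 * (1 - ε / 2) := by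
    nlinarith [mul_nonneg hρ (sub_nonneg.2 hmass), mul_nonneg hρ (sq_nonneg ε)]
  have key : ‖∑ k ∈ s, w k • v k‖ ^ 2 ≤ (ρ * (D - c)) ^ 2 := by
    have := norm_sum_smul_sq_le_of_sep s hw hv hsep
    have hcD : c * (2 * D) = σ ^ 2 * ε / 2 := by simp only [c]; field_simp; ring
    nlinarith [mul_le_mul_of_nonneg_left hsq (sq_nonneg σ),
      mul_le_mul_of_nonneg_left hmass' (sq_nonneg σ), sq_nonneg (ρ * c)]
  exact (pow_le_pow_iff_left₀ (norm_nonneg _) (mul_nonneg hρ (sub_nonneg.2 hc)) two_ne_zero).1 key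

theorem norm_sum_smul_le_sub_of_weight_lt [Fintype ι] {v : ι → E} {π : ι → ℝ} {D σ h ε t : ℝ}
    (hπ0 : ∀ k, 0 ≤ π k) (hπ1 : ∑ k, π k = 1) (hv : ∀ k, ‖v k‖ ≤ D)
    (hsep : ∀ k l, k ≠ l → 2 * σ ^ 2 ≤ ‖v k - v l‖ ^ 2)
    (hout : ∀ k, D - h ≤ ‖v k‖ → π k < 1 - ε)
    (hD : 0 < D) (hh : 0 ≤ h) (ht : 0 ≤ t) (hε : ε < 1 / 2) (hσε : σ ^ 2 * ε ≤ 4 * D ^ 2)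
    (htε : 2 * t ≤ ε * h) (htD : 6 * D * t ≤ σ ^ 2 * ε) :
    ‖∑ k, π k • v k‖ ≤ D - t := by
  classical
  set T := Finset.univ.filter fun k => D - h ≤ ‖v k‖
  set ρ := ∑ k ∈ T, π k
  have hρ1 : ρ ≤ 1 :=
    hπ1 ▸ Finset.sum_le_sum_of_subset_of_nonneg T.subset_univ fun k _ _ => hπ0 k
  have hsplit : ‖∑ k, π k • v k‖ ≤ ‖∑ k ∈ T, π k • v k‖ + (1 - ρ) * (D - h) := by
    have hrest : ∑ k ∈ Tᶜ, π k = 1 - ρ := by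
      rw [← hπ1, ← Finset.sum_add_sum_compl T π]; ring
    rw [← Finset.sum_add_sum_compl T, ← hrest]
    refine (norm_add_le _ _).trans (add_le_add_right ?_ _)
    refine norm_sum_smul_le_of_norm_le _ (fun k _ => hπ0 k) fun k hk => ?_
    simp only [T, Finset.compl_filter, Finset.mem_filter, Finset.mem_univ, true_and] at hk
    exact (not_le.1 hk).le
  rcases le_or_gt (ε / 2) (1 - ρ) with hfar | hnear
  · have hT := norm_sum_smul_le_of_norm_le T (fun k _ => hπ0 k) fun k _ => hv k
    nlinarith
  · have hT := norm_sum_smul_le_of_weight_le T (fun k _ => hπ0 k) (fun k _ => hv k)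
      (fun k _ l _ => hsep k l) (fun k hk => (hout k (Finset.mem_filter.1 hk).2).le)
      (by linarith) hD (by linarith) hσε
    have hc : 3 / 2 * t ≤ σ ^ 2 * ε / (4 * D) := by rw [le_div_iff₀ (by positivity)]; linarith
    nlinarith [mul_le_mul_of_nonneg_left hc (by linarith : (0:ℝ) ≤ ρ)]

end Separated

theorem vnorm_eq_norm_toLp {d : ℕ} (x : Fin d → ℝ) :
    vnorm x = ‖(WithLp.toLp 2 x : EuclideanSpace ℝ (Fin d))‖ := by
  simp [vnorm, EuclideanSpace.norm_eq, Real.norm_eq_abs, sq_abs]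

theorem toLp_mulVec_eq_sum {d K : ℕ} (V : Matrix (Fin d) (Fin K) ℝ) (π : Fin K → ℝ) :
    (WithLp.toLp 2 (V.mulVec π) : EuclideanSpace ℝ (Fin d)) =
      ∑ k, π k • WithLp.toLp 2 fun i => V i k := by
  ext i
  simp [Matrix.mulVec, dotProduct, mul_comm]

theorem stmt_19_general (d K : ℕ) (V : Matrix (Fin d) (Fin K) ℝ)
    (σ : ℝ) (hσ : 0 < σ)
    (dmax : ℝ) (hdmax : dmax = ⨆ k : Fin K, vnorm (fun i => V i k))
    (hdlow : σ / 2 ≤ dmax)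
    (hsep : ∀ k ℓ : Fin K, k ≠ ℓ →
      Real.sqrt 2 * σ ≤ vnorm ((fun i => V i k) - fun i => V i ℓ))
    (t : ℝ) (ht : 0 < t)
    (h₀ : ℝ) (hh₀ : h₀ = σ / 3)
    (ε₀ : ℝ) (hε₀u : ε₀ < 1 / 2) (hε₀l : (6 / σ) * (max 1 (dmax / σ) * t) ≤ ε₀)
    (x : Fin d → ℝ)
    (hxS : ∃ π : Fin K → ℝ, (∀ j, 0 ≤ π j) ∧ ∑ j, π j = 1 ∧ x = V.mulVec π)
    (hxout : ∀ k : Fin K, dmax - h₀ ≤ vnorm (fun i => V i k) →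
      ¬ ∃ π : Fin K → ℝ, (∀ j, 0 ≤ π j) ∧ ∑ j, π j = 1 ∧ 1 - ε₀ ≤ π k ∧ x = V.mulVec π) :
    vnorm x ≤ dmax - t := by
  obtain ⟨π, hπ0, hπ1, rfl⟩ := hxS
  set v : Fin K → EuclideanSpace ℝ (Fin d) := fun k => WithLp.toLp 2 fun i => V i k
  have hv : ∀ k, ‖v k‖ ≤ dmax := fun k => by
    rw [hdmax, ← vnorm_eq_norm_toLp]
    exact le_ciSup (f := fun k => vnorm fun i => V i k) (Set.finite_range _).bddAbove k
  have hsep' : ∀ k l, k ≠ l → 2 * σ ^ 2 ≤ ‖v k - v l‖ ^ 2 := fun k l hkl => by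
    have := hsep k l hkl
    rw [vnorm_eq_norm_toLp, WithLp.toLp_sub] at this
    calc 2 * σ ^ 2 = (Real.sqrt 2 * σ) ^ 2 := by rw [mul_pow, Real.sq_sqrt zero_le_two]
      _ ≤ ‖v k - v l‖ ^ 2 := pow_le_pow_left₀ (by positivity) this 2
  have hout : ∀ k, dmax - h₀ ≤ ‖v k‖ → π k < 1 - ε₀ := fun k hk =>
    not_le.1 fun hπk => hxout k ((vnorm_eq_norm_toLp _).trans_ge hk) ⟨π, hπ0, hπ1, hπk, rfl⟩
  have hM : 6 * (max 1 (dmax / σ) * t) ≤ ε₀ * σ := by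
    rwa [← mul_div_right_comm, div_le_iff₀ hσ] at hε₀l
  have htε : 6 * t ≤ ε₀ * σ := by nlinarith [le_max_left 1 (dmax / σ)]
  have htD : 6 * dmax * t ≤ σ ^ 2 * ε₀ := by
    have : 6 * (dmax / σ * t) ≤ ε₀ * σ := by nlinarith [le_max_right 1 (dmax / σ)]
    rw [div_mul_eq_mul_div, mul_div_assoc', div_le_iff₀ hσ] at this
    linarith
  subst hh₀
  rw [vnorm_eq_norm_toLp, toLp_mulVec_eq_sum]
  exact norm_sum_smul_le_sub_of_weight_lt hπ0 hπ1 hv hsep' hout (by linarith) (by positivity)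
    ht.le hε₀u (by nlinarith) (by linarith) htD

/-- points of the simplex outside all near-maximal simplicial neighborhoods
have norm at most d_max − t. -/
theorem stmt_19 (d K : ℕ) (hK : 2 ≤ K) (V : Matrix (Fin d) (Fin K) ℝ)
    (σ : ℝ) (hσ : 0 < σ)
    (dmax : ℝ) (hdmax : dmax = ⨆ k : Fin K, vnorm (fun i => V i k))
    (hdlow : σ / 2 ≤ dmax)
    (hsep : ∀ k ℓ : Fin K, k ≠ ℓ →
      Real.sqrt 2 * σ ≤ vnorm ((fun i => V i k) - fun i => V i ℓ))
    (t : ℝ) (ht : 0 < t) (htu : max 1 (dmax / σ) * t < 3 * σ)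
    (h₀ : ℝ) (hh₀ : h₀ = σ / 3)
    (ε₀ : ℝ) (hε₀u : ε₀ < 1 / 2) (hε₀l : (6 / σ) * (max 1 (dmax / σ) * t) ≤ ε₀)
    (x : Fin d → ℝ)
    (hxS : ∃ π : Fin K → ℝ, (∀ j, 0 ≤ π j) ∧ ∑ j, π j = 1 ∧ x = V.mulVec π)
    (hxout : ∀ k : Fin K, dmax - h₀ ≤ vnorm (fun i => V i k) →
      ¬ ∃ π : Fin K → ℝ, (∀ j, 0 ≤ π j) ∧ ∑ j, π j = 1 ∧ 1 - ε₀ ≤ π k ∧ x = V.mulVec π) :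
    vnorm x ≤ dmax - t :=
  stmt_19_general d K V σ hσ dmax hdmax hdlow hsep t ht h₀ hh₀ ε₀ hε₀u hε₀l x hxS hxout
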